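/- Let H be a weak Hopf algebra, C a nonzero coalgebra, and λ : H → k a linear map. Then the map h·c := λ(h)c makes C a left partial H-module coalgebra if and only if (i) λ(1_H) = 1 and (ii) λ(h)λ(k) = λ(hk₁)λ(k₂) for all h,k ∈ H. Moreover, this partial action is symmetric if and only if in addition λ(h)λ(k) = λ(k₁)λ(hk₂) for all h,k ∈ H. -/
import Mathlib


open TensorProduct Coalgebra

noncomputable section

variable (k : Type*) [Field k]

section WeakHopfDefs

variable (H : Type*) [Ring H] [Algebra k H] [Coalgebra k H]

/-- The target map `ε_t(h) = ε(1₁ h) 1₂` of a weak bialgebra. -/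
def wεt (h : H) : H :=
  (TensorProduct.lid k H)
    ((TensorProduct.map (counit (R := k) ∘ₗ LinearMap.mulRight k h) (LinearMap.id))
      (comul (R := k) (1 : H)))

/-- The source map `ε_s(h) = 1₁ ε(h 1₂)` of a weak bialgebra. -/
def wεs (h : H) : H :=
  (TensorProduct.rid k H)
    ((TensorProduct.map (LinearMap.id) (counit (R := k) ∘ₗ LinearMap.mulLeft k h))
      (comul (R := k) (1 : H)))

/-- A weak Hopf algebra structure on an algebra `H` which is also a coalgebra:
the weak bialgebra axioms together with an antipode `S`. -/
structure WeakHopf : Type _ where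
  /-- Δ is multiplicative -/
  comul_mul : ∀ h g : H, comul (R := k) (h * g) = comul (R := k) h * comul (R := k) g
  /-- ε(hgl) = Σ ε(h g₁) ε(g₂ l) -/
  counit_weak_mul : ∀ h g l : H, counit (R := k) (h * g * l)
      = LinearMap.mul' k k
          ((TensorProduct.map (counit (R := k) ∘ₗ LinearMap.mulLeft k h)
              (counit (R := k) ∘ₗ LinearMap.mulRight k l)) (comul (R := k) g))
  /-- ε(hgl) = Σ ε(h g₂) ε(g₁ l) -/
  counit_weak_mul' : ∀ h g l : H, counit (R := k) (h * g * l)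
      = LinearMap.mul' k k
          ((TensorProduct.map (counit (R := k) ∘ₗ LinearMap.mulLeft k h)
              (counit (R := k) ∘ₗ LinearMap.mulRight k l))
            ((TensorProduct.comm k H H) (comul (R := k) g)))
  /-- (1 ⊗ Δ(1))(Δ(1) ⊗ 1) = Δ²(1) -/
  comul_one_left :
      ((1 : H) ⊗ₜ[k] comul (R := k) (1 : H))
          * ((TensorProduct.assoc k H H H) (comul (R := k) (1 : H) ⊗ₜ[k] (1 : H)))
        = (LinearMap.lTensor H (comul (R := k))) (comul (R := k) (1 : H))
  /-- (Δ(1) ⊗ 1)(1 ⊗ Δ(1)) = Δ²(1) -/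
  comul_one_right :
      ((TensorProduct.assoc k H H H) (comul (R := k) (1 : H) ⊗ₜ[k] (1 : H)))
          * ((1 : H) ⊗ₜ[k] comul (R := k) (1 : H))
        = (LinearMap.lTensor H (comul (R := k))) (comul (R := k) (1 : H))
  /-- the antipode -/
  S : H →ₗ[k] H
  /-- Σ h₁ S(h₂) = ε_t(h) -/
  antipode_t : ∀ h : H,
      LinearMap.mul' k H ((LinearMap.lTensor H S) (comul (R := k) h)) = wεt k H h
  /-- Σ S(h₁) h₂ = ε_s(h) -/
  antipode_s : ∀ h : H,
      LinearMap.mul' k H ((LinearMap.rTensor H S) (comul (R := k) h)) = wεs k H h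
  /-- Σ S(h₁) h₂ S(h₃) = S(h) -/
  antipode_mid : ∀ h : H,
      LinearMap.mul' k H
        ((TensorProduct.map S (LinearMap.mul' k H ∘ₗ LinearMap.lTensor H S))
          ((LinearMap.lTensor H (comul (R := k))) (comul (R := k) h))) = S h

end WeakHopfDefs

section Actions

variable (H : Type*) [Ring H] [Algebra k H] [Coalgebra k H]
variable (C : Type*) [AddCommGroup C] [Module k C] [Coalgebra k C]

/-- The Sweedler sum `Σ (h g₁ · c₁) ε(g₂ · c₂)` appearing in (PMC3). -/
def pmc3RHS (act : H →ₗ[k] C →ₗ[k] C) (h g : H) (c : C) : C :=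
  (TensorProduct.rid k C)
    ((TensorProduct.map
        ((TensorProduct.lift act) ∘ₗ (LinearMap.rTensor C (LinearMap.mulLeft k h)))
        (counit (R := k) ∘ₗ (TensorProduct.lift act)))
      ((TensorProduct.tensorTensorTensorComm k H H C C)
        (comul (R := k) g ⊗ₜ[k] comul (R := k) c)))

/-- The Sweedler sum `Σ ε(g₁ · c₁) (h g₂ · c₂)` appearing in the symmetry condition. -/
def pmc3symRHS (act : H →ₗ[k] C →ₗ[k] C) (h g : H) (c : C) : C :=
  (TensorProduct.lid k C)
    ((TensorProduct.map
        (counit (R := k) ∘ₗ (TensorProduct.lift act))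
        ((TensorProduct.lift act) ∘ₗ (LinearMap.rTensor C (LinearMap.mulLeft k h))))
      ((TensorProduct.tensorTensorTensorComm k H H C C)
        (comul (R := k) g ⊗ₜ[k] comul (R := k) c)))

/-- (MC2)/(PMC2): `Δ(h·c) = (h₁·c₁) ⊗ (h₂·c₂)`. -/
def SweedlerComulCompat (act : H →ₗ[k] C →ₗ[k] C) : Prop :=
  ∀ (h : H) (c : C),
    comul (R := k) (act h c)
      = (TensorProduct.map (TensorProduct.lift act) (TensorProduct.lift act))
          ((TensorProduct.tensorTensorTensorComm k H H C C)
            (comul (R := k) h ⊗ₜ[k] comul (R := k) c))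

/-- `C` is a left partial `H`-module coalgebra via `act` (`act h c = h · c`). -/
structure IsPartialModuleCoalgebra (act : H →ₗ[k] C →ₗ[k] C) : Prop where
  pmc1 : ∀ c : C, act 1 c = c
  pmc2 : SweedlerComulCompat k H C act
  pmc3 : ∀ (h g : H) (c : C), act h (act g c) = pmc3RHS k H C act h g c

/-- `C` is a symmetric left partial `H`-module coalgebra via `act`. -/
structure IsSymmetricPartialModuleCoalgebra (act : H →ₗ[k] C →ₗ[k] C)
    extends IsPartialModuleCoalgebra k H C act : Prop where
  pmc3sym : ∀ (h g : H) (c : C), act h (act g c) = pmc3symRHS k H C act h g c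

/-- `C` is a left `H`-module coalgebra via `act`. -/
structure IsModuleCoalgebra (act : H →ₗ[k] C →ₗ[k] C) : Prop where
  mc1 : ∀ c : C, act 1 c = c
  mc2 : SweedlerComulCompat k H C act
  mc3 : ∀ (h g : H) (c : C), act h (act g c) = act (h * g) c
  mc4 : ∀ (h : H) (c : C), counit (R := k) (act h c) = counit (R := k) (act (wεs k H h) c)

end Actions

end

set_option linter.unusedSectionVars false

section Aux

variable {k : Type*} [Field k] {H : Type*} [Ring H] [Algebra k H] [Coalgebra k H]
variable {C : Type*} [AddCommGroup C] [Module k C] [Coalgebra k C]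

lemma aux_counit_id (c : C) :
    (TensorProduct.rid k C) ((LinearMap.lTensor C (counit (R := k))) (comul (R := k) c)) = c := by
  rw [show LinearMap.lTensor C (counit (R := k)) (comul (R := k) c)
      = (counit (R := k)).lTensor C (comul (R := k) c) from rfl, lTensor_counit_comul]
  simp

lemma aux_pmc3RHS (lam : H →ₗ[k] k) (h : H) (x : H ⊗[k] H) (y : C ⊗[k] C) :
    (TensorProduct.rid k C)
      ((TensorProduct.map
          ((TensorProduct.lift ((LinearMap.lsmul k C) ∘ₗ lam)) ∘ₗ
            (LinearMap.rTensor C (LinearMap.mulLeft k h)))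
          (counit (R := k) ∘ₗ (TensorProduct.lift ((LinearMap.lsmul k C) ∘ₗ lam))))
        ((TensorProduct.tensorTensorTensorComm k H H C C) (x ⊗ₜ[k] y)))
    = (LinearMap.mul' k k ((TensorProduct.map (lam ∘ₗ LinearMap.mulLeft k h) lam) x)) •
        ((TensorProduct.rid k C) ((LinearMap.lTensor C (counit (R := k))) y)) := by
  induction x using TensorProduct.induction_on with
  | zero => simp
  | tmul a b =>
    induction y using TensorProduct.induction_on with
    | zero => simp
    | tmul u v =>
      simp [tensorTensorTensorComm_tmul, smul_smul, mul_comm, mul_left_comm, mul_assoc]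
    | add y1 y2 ih1 ih2 => simp_all [tmul_add, smul_add]
  | add x1 x2 ih1 ih2 => simp_all [add_tmul, add_smul]

lemma aux_pmc3symRHS (lam : H →ₗ[k] k) (h : H) (x : H ⊗[k] H) (y : C ⊗[k] C) :
    (TensorProduct.lid k C)
      ((TensorProduct.map
          (counit (R := k) ∘ₗ (TensorProduct.lift ((LinearMap.lsmul k C) ∘ₗ lam)))
          ((TensorProduct.lift ((LinearMap.lsmul k C) ∘ₗ lam)) ∘ₗ
            (LinearMap.rTensor C (LinearMap.mulLeft k h))))
        ((TensorProduct.tensorTensorTensorComm k H H C C) (x ⊗ₜ[k] y)))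
    = (LinearMap.mul' k k ((TensorProduct.map lam (lam ∘ₗ LinearMap.mulLeft k h)) x)) •
        ((TensorProduct.lid k C) ((LinearMap.rTensor C (counit (R := k))) y)) := by
  induction x using TensorProduct.induction_on with
  | zero => simp
  | tmul a b =>
    induction y using TensorProduct.induction_on with
    | zero => simp
    | tmul u v =>
      simp [tensorTensorTensorComm_tmul, smul_smul, mul_comm, mul_left_comm, mul_assoc]
    | add y1 y2 ih1 ih2 => simp_all [tmul_add, smul_add]
  | add x1 x2 ih1 ih2 => simp_all [add_tmul, add_smul]

lemma aux_counit_id' (c : C) :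
    (TensorProduct.lid k C) ((LinearMap.rTensor C (counit (R := k))) (comul (R := k) c)) = c := by
  rw [show LinearMap.rTensor C (counit (R := k)) (comul (R := k) c)
      = (counit (R := k)).rTensor C (comul (R := k) c) from rfl, rTensor_counit_comul]
  simp

lemma aux_pmc2 (lam : H →ₗ[k] k) (x : H ⊗[k] H) (y : C ⊗[k] C) :
    (TensorProduct.map (TensorProduct.lift ((LinearMap.lsmul k C) ∘ₗ lam))
        (TensorProduct.lift ((LinearMap.lsmul k C) ∘ₗ lam)))
      ((TensorProduct.tensorTensorTensorComm k H H C C) (x ⊗ₜ[k] y))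
    = (LinearMap.mul' k k ((TensorProduct.map lam lam) x)) • y := by
  induction x using TensorProduct.induction_on with
  | zero => simp
  | tmul a b =>
    induction y using TensorProduct.induction_on with
    | zero => simp
    | tmul u v =>
      simp [tensorTensorTensorComm_tmul, smul_smul, smul_tmul', tmul_smul, mul_comm]
    | add y1 y2 ih1 ih2 => simp_all [tmul_add, smul_add]
  | add x1 x2 ih1 ih2 => simp_all [add_tmul, add_smul]

end Aux

/-- For a nonzero coalgebra `C`, the map `h · c := λ(h) • c` makes `C` a
left partial `H`-module coalgebra iff `λ(1) = 1` and `λ(h)λ(k) = λ(hk₁)λ(k₂)`; it is a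
symmetric partial action iff in addition `λ(h)λ(k) = λ(k₁)λ(hk₂)`. -/
theorem partial_module_coalgebra_via_lambda_iff
    (k : Type*) [Field k] (H : Type*) [Ring H] [Algebra k H] [Coalgebra k H]
    (C : Type*) [AddCommGroup C] [Module k C] [Coalgebra k C] [Nontrivial C]
    (wh : WeakHopf k H) (lam : H →ₗ[k] k) :
    (IsPartialModuleCoalgebra k H C ((LinearMap.lsmul k C) ∘ₗ lam) ↔
      (lam 1 = 1 ∧
       (∀ h g : H, lam h * lam g
          = LinearMap.mul' k k
              ((TensorProduct.map (lam ∘ₗ LinearMap.mulLeft k h) lam) (comul (R := k) g))))) ∧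
    (IsSymmetricPartialModuleCoalgebra k H C ((LinearMap.lsmul k C) ∘ₗ lam) ↔
      (lam 1 = 1 ∧
       (∀ h g : H, lam h * lam g
          = LinearMap.mul' k k
              ((TensorProduct.map (lam ∘ₗ LinearMap.mulLeft k h) lam) (comul (R := k) g))) ∧
       (∀ h g : H, lam h * lam g
          = LinearMap.mul' k k
              ((TensorProduct.map lam (lam ∘ₗ LinearMap.mulLeft k h)) (comul (R := k) g))))) := by
  obtain ⟨c0, hc0⟩ := exists_ne (0 : C)
  have hsc : ∀ a b : k, a • c0 = b • c0 → a = b := by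
    intro a b hab
    have h0 : (a - b) • c0 = 0 := by rw [sub_smul, hab, sub_self]
    rcases smul_eq_zero.mp h0 with h | h
    · exact sub_eq_zero.mp h
    · exact absurd h hc0
  have actapp : ∀ (h : H) (c : C), ((LinearMap.lsmul k C) ∘ₗ lam) h c = lam h • c := by
    intro h c; rfl
  have lhs_eq : ∀ (h g : H) (c : C),
      ((LinearMap.lsmul k C) ∘ₗ lam) h (((LinearMap.lsmul k C) ∘ₗ lam) g c)
        = (lam h * lam g) • c := by
    intro h g c; rw [actapp, actapp, smul_smul]
  have rhs_eq : ∀ (h g : H) (c : C),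
      pmc3RHS k H C ((LinearMap.lsmul k C) ∘ₗ lam) h g c
        = (LinearMap.mul' k k
            ((TensorProduct.map (lam ∘ₗ LinearMap.mulLeft k h) lam) (comul (R := k) g))) • c := by
    intro h g c
    rw [pmc3RHS, aux_pmc3RHS, aux_counit_id]
  have rhs_sym_eq : ∀ (h g : H) (c : C),
      pmc3symRHS k H C ((LinearMap.lsmul k C) ∘ₗ lam) h g c
        = (LinearMap.mul' k k
            ((TensorProduct.map lam (lam ∘ₗ LinearMap.mulLeft k h)) (comul (R := k) g))) • c := by
    intro h g c
    rw [pmc3symRHS, aux_pmc3symRHS, aux_counit_id']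
  have main1 : IsPartialModuleCoalgebra k H C ((LinearMap.lsmul k C) ∘ₗ lam) ↔
      (lam 1 = 1 ∧
       (∀ h g : H, lam h * lam g
          = LinearMap.mul' k k
              ((TensorProduct.map (lam ∘ₗ LinearMap.mulLeft k h) lam) (comul (R := k) g)))) := by
    constructor
    · intro hP
      refine ⟨?_, ?_⟩
      · have := hP.pmc1 c0
        rw [actapp] at this
        exact hsc _ _ (by rw [this, one_smul])
      · intro h g
        have := hP.pmc3 h g c0
        rw [lhs_eq, rhs_eq] at this
        exact hsc _ _ this
    · rintro ⟨h1, h2⟩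
      have hdiag : ∀ h : H,
          LinearMap.mul' k k ((TensorProduct.map lam lam) (comul (R := k) h)) = lam h := by
        intro h
        have := h2 1 h
        rw [h1, one_mul, LinearMap.mulLeft_one, LinearMap.comp_id] at this
        exact this.symm
      refine ⟨?_, ?_, ?_⟩
      · intro c; rw [actapp, h1, one_smul]
      · intro h c
        rw [actapp, aux_pmc2, hdiag, map_smul]
      · intro h g c
        rw [lhs_eq, rhs_eq, h2]
  refine ⟨main1, ?_⟩
  constructor
  · intro hS
    obtain ⟨h1, h2⟩ := main1.mp hS.toIsPartialModuleCoalgebra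
    refine ⟨h1, h2, ?_⟩
    intro h g
    have := hS.pmc3sym h g c0
    rw [lhs_eq, rhs_sym_eq] at this
    exact hsc _ _ this
  · rintro ⟨h1, h2, h3⟩
    refine ⟨main1.mpr ⟨h1, h2⟩, ?_⟩
    intro h g c
    rw [lhs_eq, rhs_sym_eq, h3]
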